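/- Assume in addition that R is an integral domain of characteristic zero and that ω ≠ 0. Let u, v ∈ ℕ^{r+1} be exponent vectors. Then the coefficient of t^u in σ_ω(t^v) is nonzero if and only if there exist natural numbers c_1, …, c_r with 0 ≤ c_j ≤ v_j for all j and v = u + Σ_{j=1}^{r} c_j·(e_j − e_{j−1}); moreover, in that case this coefficient equals ∏_{j=1}^{r} C(v_j, c_j)·ω^{c_j}, where C(·,·) denotes the binomial coefficient. -/

import Mathlib

open MvPolynomial Finset

/-!
Since `σ_ω(t^v) = t_0^{v_0} ∏_{i ≥ 1} (t_i + ω t_{i-1})^{v_i}`, the binomial theorem writes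
`σ_ω(t^v)` as the sum, over the vectors `c` with `c_i ≤ v_i`, of the terms
`∏ C(v_i, c_i) ω^{c_i} · t^{v - ∑ c_i (e_i - e_{i-1})}`. The map `c ↦ ∑ c_i (e_i - e_{i-1})` is
injective (its coordinate `i - 1` recovers `c_i` once `c_1, …, c_{i-1}` are known), so every
coefficient of `σ_ω(t^v)` is a single such term or zero, and the binomial coefficients and `ω` do
not vanish in a domain of characteristic zero.
-/

/-- The `R`-algebra endomorphism `σ_ω` of `R[t_0, …, t_r]` determined by
`σ_ω(t_0) = t_0` and `σ_ω(t_i) = t_i + ω·t_{i-1}` for `1 ≤ i ≤ r`. -/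
noncomputable def sigmaOmega {R : Type*} [CommRing R] {r : ℕ} (ω : R) :
    MvPolynomial (Fin (r + 1)) R →ₐ[R] MvPolynomial (Fin (r + 1)) R :=
  aeval fun i : Fin (r + 1) =>
    if i.1 = 0 then X i
    else X i + C ω * X ⟨i.1 - 1, lt_of_le_of_lt (Nat.sub_le _ _) i.isLt⟩

theorem MvPolynomial.X_add_C_mul_X_pow {R σ : Type*} [CommRing R] (a b : σ) (ω : R) (n : ℕ) :
    (X b + C ω * X a : MvPolynomial σ R) ^ n =
      ∑ m ∈ range (n + 1),
        monomial (Finsupp.single a m + Finsupp.single b (n - m)) ((n.choose m : R) * ω ^ m) := by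
  rw [add_comm, add_pow]
  refine sum_congr rfl fun m _ => ?_
  rw [mul_pow, ← C_pow, X_pow_eq_monomial, X_pow_eq_monomial, ← map_natCast C, C_mul_monomial,
    monomial_mul, mul_comm, C_mul_monomial, mul_comm (ω ^ m)]
  simp

theorem Fintype.mem_piFinset_range_succ {ι : Type*} [Fintype ι] [DecidableEq ι] {b d : ι → ℕ} :
    d ∈ Fintype.piFinset (fun i => range (b i + 1)) ↔ ∀ i, d i ≤ b i := by
  simp

theorem prod_choose_mul_pow_ne_zero {R ι : Type*} [CommRing R] [IsDomain R] [CharZero R]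
    {ω : R} (hω : ω ≠ 0) {s : Finset ι} {n d : ι → ℕ} (hd : ∀ i ∈ s, d i ≤ n i) :
    ∏ i ∈ s, ((n i).choose (d i) : R) * ω ^ d i ≠ 0 :=
  prod_ne_zero_iff.2 fun i hi =>
    mul_ne_zero (Nat.cast_ne_zero.2 (Nat.choose_pos (hd i hi)).ne') (pow_ne_zero _ hω)

theorem Fin.forall_one_le_val_imp_iff {r : ℕ} {p : Fin (r + 1) → Prop} :
    (∀ j : Fin (r + 1), 1 ≤ j.1 → p j) ↔ ∀ i : Fin r, p i.succ := by
  simp [Fin.forall_fin_succ]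

theorem Fin.val_eq_val_succ_sub_one_iff {r : ℕ} {k : Fin (r + 1)} {i : Fin r} :
    k.1 = i.succ.1 - 1 ↔ k = i.castSucc := by
  simp [Fin.ext_iff]

@[to_additive Fin.sum_filter_one_le_val]
theorem Fin.prod_filter_one_le_val {M : Type*} [CommMonoid M] {r : ℕ} (f : Fin (r + 1) → M) :
    ∏ j ∈ univ.filter (fun j : Fin (r + 1) => 1 ≤ j.1), f j = ∏ i : Fin r, f i.succ := by
  rw [prod_filter, Fin.prod_univ_succ]
  simp

section

variable {R : Type*} [CommRing R] {r : ℕ}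

theorem sigmaOmega_X_zero (ω : R) : sigmaOmega ω (X 0 : MvPolynomial (Fin (r + 1)) R) = X 0 := by
  simp [sigmaOmega]

theorem sigmaOmega_X_succ (ω : R) (i : Fin r) :
    sigmaOmega ω (X i.succ : MvPolynomial (Fin (r + 1)) R) = X i.succ + C ω * X i.castSucc := by
  simp only [sigmaOmega, aeval_X, Fin.val_eq_zero_iff, Fin.succ_ne_zero, ↓reduceIte, Fin.val_succ,
    add_tsub_cancel_right]
  rfl

/- `d i` plays the role of the paper's `c_{i+1}`: the power of `ω t_i` taken from the factor
`(t_{i+1} + ω t_i)^{v_{i+1}}`. -/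
noncomputable def shiftExponent (v : Fin (r + 1) →₀ ℕ) (d : Fin r → ℕ) : Fin (r + 1) →₀ ℕ :=
  Finsupp.single 0 (v 0) +
    ∑ i, (Finsupp.single i.castSucc (d i) + Finsupp.single i.succ (v i.succ - d i))

def shiftVector (d : Fin r → ℕ) (k : Fin (r + 1)) : ℤ :=
  ∑ i, (d i : ℤ) * ((if k = i.succ then 1 else 0) - (if k = i.castSucc then 1 else 0))

theorem sigmaOmega_monomial (ω : R) (v : Fin (r + 1) →₀ ℕ) :
    sigmaOmega ω (monomial v (1 : R)) =
      ∑ d ∈ Fintype.piFinset fun i : Fin r => range (v i.succ + 1),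
        monomial (shiftExponent v d) (∏ i, ((v i.succ).choose (d i) : R) * ω ^ d i) := by
  rw [monomial_eq, C_1, one_mul, Finsupp.prod_fintype _ _ fun _ => pow_zero _, map_prod,
    Fin.prod_univ_succ]
  simp only [map_pow, sigmaOmega_X_zero, sigmaOmega_X_succ, X_add_C_mul_X_pow]
  rw [prod_univ_sum, mul_sum]
  refine sum_congr rfl fun d _ => ?_
  rw [X_pow_eq_monomial, ← monomial_sum_prod, monomial_mul, one_mul, shiftExponent]

theorem natCast_shiftExponent_apply {v : Fin (r + 1) →₀ ℕ} {d : Fin r → ℕ}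
    (hd : ∀ i, d i ≤ v i.succ) (k : Fin (r + 1)) :
    (shiftExponent v d k : ℤ) = v k - shiftVector d k := by
  have hv : v k = (if k = 0 then v 0 else 0) + ∑ i : Fin r, if k = i.succ then v i.succ else 0 := by
    rw [← Fin.sum_univ_succ (f := fun j => if k = j then v j else 0), sum_ite_eq]
    simp
  simp only [shiftExponent, Finsupp.add_apply, Finsupp.finsetSum_apply, Finsupp.single_apply]
  rw [hv, shiftVector]
  push_cast [Nat.cast_sub (hd _)]
  simp only [eq_comm (b := k)]
  rw [add_sub_assoc, ← sum_sub_distrib]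
  congr 1
  refine sum_congr rfl fun i _ => ?_
  split_ifs <;> ring

theorem shiftVector_injective : Function.Injective (shiftVector (r := r)) := by
  intro d d' h
  funext m
  induction m using WellFoundedLT.induction with
  | _ m ih =>
    have hlt : ∀ i : Fin r, m.castSucc = i.succ → i < m := fun i hi => by
      rw [Fin.ext_iff] at hi
      simp only [Fin.val_castSucc, Fin.val_succ] at hi
      rw [Fin.lt_def]
      omega
    have hlower : (∑ i, if m.castSucc = i.succ then (d i : ℤ) else 0) =
        ∑ i, if m.castSucc = i.succ then (d' i : ℤ) else 0 := by
      refine sum_congr rfl fun i _ => ?_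
      split_ifs with hi
      · rw [ih i (hlt i hi)]
      · rfl
    have hm := congrFun h m.castSucc
    simp only [shiftVector, mul_sub, sum_sub_distrib, mul_ite, mul_one, mul_zero, Fin.castSucc_inj,
      sum_ite_eq, mem_univ, if_true] at hm
    omega

theorem shiftExponent_eq_iff {u v : Fin (r + 1) →₀ ℕ} {d : Fin r → ℕ}
    (hd : ∀ i, d i ≤ v i.succ) :
    shiftExponent v d = u ↔ ∀ k, (v k : ℤ) = u k + shiftVector d k := by
  rw [Finsupp.ext_iff]
  refine forall_congr' fun k => ?_
  rw [← Nat.cast_inj (R := ℤ), natCast_shiftExponent_apply hd, sub_eq_iff_eq_add]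

theorem sum_filter_eq_shiftVector (c : Fin (r + 1) → ℕ) (k : Fin (r + 1)) :
    ∑ j ∈ univ.filter (fun j : Fin (r + 1) => 1 ≤ j.1),
        (c j : ℤ) * ((if k = j then 1 else 0) - (if k.1 = j.1 - 1 then 1 else 0)) =
      shiftVector (fun i => c i.succ) k := by
  simp only [Fin.sum_filter_one_le_val, Fin.val_eq_val_succ_sub_one_iff]
  rfl

theorem coeff_sigmaOmega_monomial (ω : R) (u v : Fin (r + 1) →₀ ℕ) :
    coeff u (sigmaOmega ω (monomial v (1 : R))) =
      ∑ d ∈ Fintype.piFinset fun i : Fin r => range (v i.succ + 1),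
        if shiftExponent v d = u then ∏ i, ((v i.succ).choose (d i) : R) * ω ^ d i else 0 := by
  rw [sigmaOmega_monomial, coeff_sum]
  exact sum_congr rfl fun d _ => coeff_monomial _ _ _

theorem coeff_sigmaOmega_monomial_of_shiftVector (ω : R) {u v : Fin (r + 1) →₀ ℕ}
    {d : Fin r → ℕ} (hd : ∀ i, d i ≤ v i.succ) (h : ∀ k, (v k : ℤ) = u k + shiftVector d k) :
    coeff u (sigmaOmega ω (monomial v (1 : R))) =
      ∏ i, ((v i.succ).choose (d i) : R) * ω ^ d i := by
  rw [coeff_sigmaOmega_monomial, sum_eq_single_of_mem d (Fintype.mem_piFinset_range_succ.2 hd),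
    if_pos ((shiftExponent_eq_iff hd).2 h)]
  intro d' hmem hne
  rw [if_neg]
  intro h'
  have hd' := Fintype.mem_piFinset_range_succ.1 hmem
  exact hne (shiftVector_injective (funext fun k => by
    linarith [(shiftExponent_eq_iff hd').1 h' k, h k]))

theorem exists_shiftVector_of_coeff_ne_zero {ω : R} {u v : Fin (r + 1) →₀ ℕ}
    (h : coeff u (sigmaOmega ω (monomial v (1 : R))) ≠ 0) :
    ∃ d : Fin r → ℕ, (∀ i, d i ≤ v i.succ) ∧ ∀ k, (v k : ℤ) = u k + shiftVector d k := by
  rw [coeff_sigmaOmega_monomial] at h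
  obtain ⟨d, hd, hne⟩ := exists_ne_zero_of_sum_ne_zero h
  have hd := Fintype.mem_piFinset_range_succ.1 hd
  exact ⟨d, hd, (shiftExponent_eq_iff hd).1 (ite_ne_right_iff.1 hne).1⟩

end

theorem stmt1_general {R : Type*} [CommRing R] [IsDomain R] [CharZero R]
    (r : ℕ) (ω : R) (hω : ω ≠ 0)
    (u v : Fin (r + 1) →₀ ℕ) :
    (MvPolynomial.coeff u (sigmaOmega ω (MvPolynomial.monomial v (1 : R))) ≠ 0 ↔
      ∃ c : Fin (r + 1) → ℕ,
        (∀ j : Fin (r + 1), 1 ≤ j.1 → c j ≤ v j) ∧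
        (∀ k : Fin (r + 1), (v k : ℤ) = (u k : ℤ) +
          ∑ j ∈ Finset.univ.filter (fun j : Fin (r + 1) => 1 ≤ j.1),
            (c j : ℤ) * ((if k = j then 1 else 0) -
              (if k.1 = j.1 - 1 then 1 else 0)))) ∧
    (∀ c : Fin (r + 1) → ℕ,
      (∀ j : Fin (r + 1), 1 ≤ j.1 → c j ≤ v j) →
      (∀ k : Fin (r + 1), (v k : ℤ) = (u k : ℤ) +
          ∑ j ∈ Finset.univ.filter (fun j : Fin (r + 1) => 1 ≤ j.1),
            (c j : ℤ) * ((if k = j then 1 else 0) -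
              (if k.1 = j.1 - 1 then 1 else 0))) →
      MvPolynomial.coeff u (sigmaOmega ω (MvPolynomial.monomial v (1 : R))) =
        ∏ j ∈ Finset.univ.filter (fun j : Fin (r + 1) => 1 ≤ j.1),
          (Nat.choose (v j) (c j) : R) * ω ^ (c j)) := by
  simp only [sum_filter_eq_shiftVector, Fin.prod_filter_one_le_val, Fin.forall_one_le_val_imp_iff]
  refine ⟨⟨fun h => ?_, fun ⟨c, hc, hv⟩ => ?_⟩,
    fun c hc hv => coeff_sigmaOmega_monomial_of_shiftVector ω hc hv⟩
  · obtain ⟨d, hd, hv⟩ := exists_shiftVector_of_coeff_ne_zero h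
    exact ⟨Fin.cons 0 d, by simpa using hd, by simpa using hv⟩
  · rw [coeff_sigmaOmega_monomial_of_shiftVector ω hc hv]
    exact prod_choose_mul_pow_ne_zero hω fun i _ => hc i

theorem stmt1 {R : Type*} [CommRing R] [IsDomain R] [CharZero R]
    (r : ℕ) (hr : 1 ≤ r) (ω : R) (hω : ω ≠ 0)
    (u v : Fin (r + 1) →₀ ℕ) :
    (MvPolynomial.coeff u (sigmaOmega ω (MvPolynomial.monomial v (1 : R))) ≠ 0 ↔
      ∃ c : Fin (r + 1) → ℕ,
        (∀ j : Fin (r + 1), 1 ≤ j.1 → c j ≤ v j) ∧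
        (∀ k : Fin (r + 1), (v k : ℤ) = (u k : ℤ) +
          ∑ j ∈ Finset.univ.filter (fun j : Fin (r + 1) => 1 ≤ j.1),
            (c j : ℤ) * ((if k = j then 1 else 0) -
              (if k.1 = j.1 - 1 then 1 else 0)))) ∧
    (∀ c : Fin (r + 1) → ℕ,
      (∀ j : Fin (r + 1), 1 ≤ j.1 → c j ≤ v j) →
      (∀ k : Fin (r + 1), (v k : ℤ) = (u k : ℤ) +
          ∑ j ∈ Finset.univ.filter (fun j : Fin (r + 1) => 1 ≤ j.1),
            (c j : ℤ) * ((if k = j then 1 else 0) -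
              (if k.1 = j.1 - 1 then 1 else 0))) →
      MvPolynomial.coeff u (sigmaOmega ω (MvPolynomial.monomial v (1 : R))) =
        ∏ j ∈ Finset.univ.filter (fun j : Fin (r + 1) => 1 ≤ j.1),
          (Nat.choose (v j) (c j) : R) * ω ^ (c j)) :=
  stmt1_general r ω hω u v
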